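/- The function Φ is integrable on (0,1) and ∫₀¹ Φ(u) du = 0. -/

import Mathlib

/-!
Write `B v = ∫₀ᵛ b`, `f v = v σ² / (2 B v)` and `g v = (1 - v) σ² / (2 B v)`, so that
`Φ u = ∫₀ᵘ f - ∫ᵤ¹ g` and `(1 - v) f v = v g v`. Since `B' = b` is strictly decreasing, `B` is
strictly concave with `B 0 = B 1 = 0`; hence `B (1/2) > 0` and `B v ≥ 2 B(1/2) v (1 - v)`, which
makes `(1 - v) f v` bounded on `(0, 1)`. Fubini then gives
`∫₀¹ Φ = ∫₀¹ ((1 - v) f v - v g v) dv = 0`.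
-/

open MeasureTheory Set intervalIntegral

theorem hasDerivAt_primitive_of_continuousOn {f : ℝ → ℝ} {a c x : ℝ}
    (hf : ContinuousOn f (Icc a c)) (hx : x ∈ Ioo a c) :
    HasDerivAt (fun u => ∫ t in a..u, f t) (f x) x :=
  integral_hasDerivAt_right
    (hf.mono (uIcc_subset_Icc (left_mem_Icc.2 (hx.1.trans hx.2).le)
      (Ioo_subset_Icc_self hx))).intervalIntegrable
    ((hf.mono Ioo_subset_Icc_self).stronglyMeasurableAtFilter isOpen_Ioo x hx)
    (hf.continuousAt (Icc_mem_nhds hx.1 hx.2))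

theorem strictConcaveOn_primitive_of_strictAntiOn {f : ℝ → ℝ} {a c : ℝ}
    (hf : ContinuousOn f (Icc a c)) (hanti : StrictAntiOn f (Icc a c)) :
    StrictConcaveOn ℝ (Icc a c) (fun u => ∫ t in a..u, f t) := by
  refine StrictAntiOn.strictConcaveOn_of_deriv (convex_Icc a c) ?_ ?_
  · rcases le_or_gt a c with hac | hca
    · have := continuousOn_primitive_interval (a := a) (b := c)
        (by rw [uIcc_of_le hac]; exact hf.integrableOn_Icc (μ := volume))
      rwa [uIcc_of_le hac] at this
    · rw [Icc_eq_empty hca.not_ge]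
      exact continuousOn_empty _
  · rw [interior_Icc]
    exact (hanti.mono Ioo_subset_Icc_self).congr fun x hx =>
      (hasDerivAt_primitive_of_continuousOn hf hx).deriv.symm

theorem ConcaveOn.two_mul_apply_half_mul_le {f : ℝ → ℝ} (hf : ConcaveOn ℝ (Icc 0 1) f)
    (h0 : f 0 = 0) (h1 : f 1 = 0) {v : ℝ} (hv : v ∈ Icc 0 1) :
    2 * f (1 / 2) * (v * (1 - v)) ≤ f v := by
  have mem0 : (0 : ℝ) ∈ Icc 0 1 := left_mem_Icc.2 zero_le_one
  have mem1 : (1 : ℝ) ∈ Icc 0 1 := right_mem_Icc.2 zero_le_one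
  have memh : (1 / 2 : ℝ) ∈ Icc 0 1 := ⟨by norm_num, by norm_num⟩
  have half_nonneg : 0 ≤ f (1 / 2) := by
    have := hf.2 mem0 mem1 (by norm_num : (0:ℝ) ≤ 1 / 2) (by norm_num : (0:ℝ) ≤ 1 / 2)
      (by norm_num)
    norm_num [h0, h1] at this
    linarith
  obtain ⟨hv0, hv1⟩ := hv
  rcases le_total v (1 / 2) with hv | hv
  · have key := hf.2 mem0 memh (by linarith : 0 ≤ 1 - 2 * v) (by linarith : 0 ≤ 2 * v)
      (by ring)
    rw [smul_eq_mul, smul_eq_mul, smul_eq_mul, smul_eq_mul, h0,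
      show (1 - 2 * v) * 0 + 2 * v * (1 / 2) = v by ring] at key
    nlinarith [mul_nonneg half_nonneg hv0]
  · have key := hf.2 mem1 memh (by linarith : 0 ≤ 2 * v - 1) (by linarith : 0 ≤ 2 - 2 * v)
      (by ring)
    rw [smul_eq_mul, smul_eq_mul, smul_eq_mul, smul_eq_mul, h1,
      show (2 * v - 1) * 1 + (2 - 2 * v) * (1 / 2) = v by ring] at key
    nlinarith [mul_nonneg half_nonneg (sub_nonneg.2 hv1)]

theorem integrableOn_mul_one_sub_div {B : ℝ → ℝ} {κ : ℝ} (hκ : 0 < κ)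
    (hB : ContinuousOn B (Ioo 0 1)) (hlow : ∀ v ∈ Ioo 0 1, κ * (v * (1 - v)) ≤ B v) :
    IntegrableOn (fun v => v * (1 - v) / B v) (Ioo 0 1) := by
  have hpos : ∀ v ∈ Ioo (0:ℝ) 1, 0 < v * (1 - v) := fun v hv => mul_pos hv.1 (sub_pos.2 hv.2)
  have hBpos : ∀ v ∈ Ioo (0:ℝ) 1, 0 < B v := fun v hv =>
    (mul_pos hκ (hpos v hv)).trans_le (hlow v hv)
  refine IntegrableOn.of_bound measure_Ioo_lt_top
    (((continuousOn_id.mul (continuousOn_const.sub continuousOn_id)).div hB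
      fun v hv => (hBpos v hv).ne').aestronglyMeasurable measurableSet_Ioo) κ⁻¹
    (ae_restrict_of_forall_mem measurableSet_Ioo fun v hv => ?_)
  rw [Real.norm_of_nonneg (div_pos (hpos v hv) (hBpos v hv)).le, div_le_iff₀ (hBpos v hv)]
  calc v * (1 - v) = κ⁻¹ * (κ * (v * (1 - v))) := by field_simp
    _ ≤ κ⁻¹ * B v := by gcongr; exact hlow v hv

theorem aestronglyMeasurable_of_integrableOn_mul {μ : Measure ℝ} {w f : ℝ → ℝ} {s : Set ℝ}
    (hs : MeasurableSet s) (hw : ContinuousOn w s) (hw0 : ∀ x ∈ s, w x ≠ 0)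
    (h : IntegrableOn (fun x => w x * f x) s μ) : AEStronglyMeasurable f (μ.restrict s) :=
  (((hw.inv₀ hw0).aestronglyMeasurable hs).mul h.aestronglyMeasurable).congr
    (ae_restrict_of_forall_mem hs fun x hx => by simp [hw0 x hx])

theorem setIntegral_Ioo_zero_one_ite_le {v : ℝ} (hv : v ∈ Ioo 0 1) (a c : ℝ) :
    ∫ u in Ioo 0 1, (if v ≤ u then a else c) = (1 - v) * a + v * c := by
  have hsplit : (fun u : ℝ => if v ≤ u then a else c) =
      fun u => (Ici v).indicator (fun _ => a - c) u + c := by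
    ext u
    by_cases h : v ≤ u <;> simp [h]
  have hinter : Ioo 0 1 ∩ Ici v = Ico v 1 := by
    ext u
    exact ⟨fun h => ⟨h.2, h.1.2⟩, fun h => ⟨⟨hv.1.trans_le h.1, h.2⟩, h.1⟩⟩
  rw [hsplit, integral_add (integrable_const _ |>.indicator measurableSet_Ici) (integrable_const _),
    setIntegral_indicator measurableSet_Ici, hinter, setIntegral_const, setIntegral_const,
    Real.volume_real_Ico_of_le hv.2.le, Real.volume_real_Ioo_of_le zero_le_one, smul_eq_mul,
    smul_eq_mul]
  ring

theorem integrable_ite_le_const {μ : Measure ℝ} [IsFiniteMeasure μ] (v a c : ℝ) :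
    Integrable (fun u : ℝ => if v ≤ u then a else c) μ :=
  Integrable.piecewise (s := Ici v) measurableSet_Ici (integrable_const a).integrableOn
    (integrable_const c).integrableOn

theorem intervalIntegral_ite_le {f g : ℝ → ℝ} {u : ℝ} (hu : u ∈ Icc 0 1)
    (h : IntervalIntegrable (fun v => if v ≤ u then f v else -g v) volume 0 1) :
    ∫ v in (0:ℝ)..1, (if v ≤ u then f v else -g v) =
      (∫ v in (0:ℝ)..u, f v) - ∫ v in u..1, g v := by
  have hleft : ∫ v in (0:ℝ)..u, (if v ≤ u then f v else -g v) = ∫ v in (0:ℝ)..u, f v :=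
    integral_congr_ae <| Filter.Eventually.of_forall fun v hv =>
      if_pos (uIoc_of_le hu.1 ▸ hv).2
  have hright : ∫ v in u..1, (if v ≤ u then f v else -g v) = ∫ v in u..1, -g v :=
    integral_congr_ae <| Filter.Eventually.of_forall fun v hv =>
      if_neg (not_le.2 (uIoc_of_le hu.2 ▸ hv).1)
  rw [← integral_add_adjacent_intervals (b := u)
    (h.mono_set (uIcc_subset_uIcc_left (mem_uIcc_of_le hu.1 hu.2)))
    (h.mono_set (uIcc_subset_uIcc_right (mem_uIcc_of_le hu.1 hu.2))),
    hleft, hright, intervalIntegral.integral_neg, sub_eq_add_neg]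

theorem integrableOn_integral_sub_integral_and_eq {f g : ℝ → ℝ}
    (hf : IntegrableOn (fun v => (1 - v) * f v) (Ioo 0 1))
    (hg : IntegrableOn (fun v => v * g v) (Ioo 0 1)) :
    IntegrableOn (fun u => (∫ v in (0:ℝ)..u, f v) - ∫ v in u..1, g v) (Ioo 0 1) ∧
      ∫ u in Ioo 0 1, ((∫ v in (0:ℝ)..u, f v) - ∫ v in u..1, g v) =
        ∫ v in Ioo 0 1, ((1 - v) * f v - v * g v) := by
  set μ := volume.restrict (Ioo (0:ℝ) 1)
  have : IsFiniteMeasure μ := isFiniteMeasure_restrict.2 measure_Ioo_lt_top.ne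
  -- `K (u, v)` integrates in `v` to `∫₀ᵘ f - ∫ᵤ¹ g` and in `u` to `(1 - v) * f v - v * g v`.
  set K : ℝ × ℝ → ℝ := fun p => if p.2 ≤ p.1 then f p.2 else -g p.2
  have hfm : AEStronglyMeasurable f μ :=
    aestronglyMeasurable_of_integrableOn_mul measurableSet_Ioo
      (continuousOn_const.sub continuousOn_id) (fun v hv => (sub_pos.2 hv.2).ne') hf
  have hgm : AEStronglyMeasurable g μ :=
    aestronglyMeasurable_of_integrableOn_mul measurableSet_Ioo
      continuousOn_id (fun v hv => hv.1.ne') hg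
  have hKm : AEStronglyMeasurable K (μ.prod μ) :=
    AEStronglyMeasurable.piecewise (s := {p : ℝ × ℝ | p.2 ≤ p.1})
      (measurableSet_le measurable_snd measurable_fst) hfm.comp_snd.restrict
      hgm.neg.comp_snd.restrict
  have hK : Integrable K (μ.prod μ) := by
    rw [integrable_prod_iff' hKm]
    refine ⟨ae_of_all _ fun v => integrable_ite_le_const v (f v) (-g v), ?_⟩
    refine (hf.norm.add hg.norm).congr (ae_restrict_of_forall_mem measurableSet_Ioo fun v hv => ?_)
    simp only [K, apply_ite norm, norm_neg]
    rw [setIntegral_Ioo_zero_one_ite_le hv, Pi.add_apply, norm_mul, norm_mul,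
      Real.norm_of_nonneg (sub_pos.2 hv.2).le, Real.norm_of_nonneg hv.1.le]
  have hΦ : (fun u => ∫ v, K (u, v) ∂μ) =ᵐ[μ]
      fun u => (∫ v in (0:ℝ)..u, f v) - ∫ v in u..1, g v := by
    filter_upwards [hK.prod_right_ae, ae_restrict_mem measurableSet_Ioo] with u hKu hu
    have hKu' : IntervalIntegrable (fun v => K (u, v)) volume 0 1 :=
      (intervalIntegrable_iff_integrableOn_Ioo_of_le zero_le_one).2 hKu
    have := intervalIntegral_ite_le ⟨hu.1.le, hu.2.le⟩ hKu'
    rwa [integral_of_le zero_le_one, integral_Ioc_eq_integral_Ioo] at this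
  refine ⟨hK.integral_prod_left.congr hΦ, ?_⟩
  rw [← integral_congr_ae hΦ, integral_integral_swap hK]
  refine integral_congr_ae (ae_restrict_of_forall_mem measurableSet_Ioo fun v hv => ?_)
  show ∫ u in Ioo 0 1, (if v ≤ u then f v else -g v) = _
  rw [setIntegral_Ioo_zero_one_ite_le hv, mul_neg, ← sub_eq_add_neg]

theorem stmt_7_general (b : ℝ → ℝ) (σ : ℝ)
    (hcont : ContinuousOn b (Set.Icc 0 1))
    (hanti : StrictAntiOn b (Set.Icc 0 1))
    (hB1 : ∫ v in (0:ℝ)..1, b v = 0)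
    (Φ : ℝ → ℝ)
    (hΦ : ∀ u, Φ u = (∫ v in (0:ℝ)..u, v * σ^2 / (2 * ∫ w in (0:ℝ)..v, b w))
        - ∫ v in u..(1:ℝ), (1 - v) * σ^2 / (2 * ∫ w in (0:ℝ)..v, b w)) :
    MeasureTheory.IntegrableOn Φ (Set.Ioo 0 1) ∧ ∫ u in Set.Ioo (0:ℝ) 1, Φ u = 0 := by
  set B : ℝ → ℝ := fun u => ∫ w in (0:ℝ)..u, b w
  have hconc := strictConcaveOn_primitive_of_strictAntiOn hcont hanti
  have hB0 : B 0 = 0 := integral_same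
  have hhalf : 0 < B (1 / 2) := by
    have := hconc.2 (left_mem_Icc.2 zero_le_one) (right_mem_Icc.2 zero_le_one) zero_ne_one
      (by norm_num : (0:ℝ) < 1 / 2) (by norm_num : (0:ℝ) < 1 / 2) (by norm_num)
    norm_num [hB0, hB1] at this
    exact this
  have hlow : ∀ v ∈ Ioo 0 1, 2 * B (1 / 2) * (v * (1 - v)) ≤ B v := fun v hv =>
    hconc.concaveOn.two_mul_apply_half_mul_le hB0 hB1 (Ioo_subset_Icc_self hv)
  have hBcont : ContinuousOn B (Ioo 0 1) := fun x hx =>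
    (hasDerivAt_primitive_of_continuousOn hcont hx).continuousAt.continuousWithinAt
  have hint : IntegrableOn (fun v => σ ^ 2 / 2 * (v * (1 - v) / B v)) (Ioo 0 1) :=
    (integrableOn_mul_one_sub_div (by positivity) hBcont hlow).const_mul (σ ^ 2 / 2)
  obtain ⟨hΦint, hΦeq⟩ := integrableOn_integral_sub_integral_and_eq
    (f := fun v => v * σ ^ 2 / (2 * B v)) (g := fun v => (1 - v) * σ ^ 2 / (2 * B v))
    (hint.congr_fun (fun v _ => by ring) measurableSet_Ioo)
    (hint.congr_fun (fun v _ => by ring) measurableSet_Ioo)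
  rw [funext hΦ]
  refine ⟨hΦint, hΦeq.trans ?_⟩
  simp only [show ∀ v, (1 - v) * (v * σ ^ 2 / (2 * B v)) - v * ((1 - v) * σ ^ 2 / (2 * B v)) = 0
    from fun v => by ring, MeasureTheory.integral_zero]

theorem stmt_7 (b : ℝ → ℝ) (σ : ℝ) (hσ : σ ≠ 0)
    (hcont : ContinuousOn b (Set.Icc 0 1))
    (hanti : StrictAntiOn b (Set.Icc 0 1))
    (hB1 : ∫ v in (0:ℝ)..1, b v = 0)
    (Φ : ℝ → ℝ)
    (hΦ : ∀ u, Φ u = (∫ v in (0:ℝ)..u, v * σ^2 / (2 * ∫ w in (0:ℝ)..v, b w))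
        - ∫ v in u..(1:ℝ), (1 - v) * σ^2 / (2 * ∫ w in (0:ℝ)..v, b w)) :
    MeasureTheory.IntegrableOn Φ (Set.Ioo 0 1) ∧ ∫ u in Set.Ioo (0:ℝ) 1, Φ u = 0 :=
  stmt_7_general b σ hcont hanti hB1 Φ hΦ
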